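/- arXiv:2002.04072 — 2 statements merged into one kernel-verified Lean document; each statement's English description precedes it below -/
import Mathlib

section
/- Let S be a semigroup generated by a single 𝒥-class J with S ≠ J. If the principal factor J* is a null semigroup, then |J| = 1, and hence S is monogenic (generated by one element). -/
/-- The principal two-sided ideal `S¹ x S¹` of `x`, as a subset of `S¹ = WithOne S`. -/
def principalIdeal {S : Type*} [Semigroup S] (x : S) : Set (WithOne S) :=
  {z | ∃ a b : WithOne S, z = a * (x : WithOne S) * b}

theorem principalIdeal_mul_left {S : Type*} [Semigroup S] (u v : S) :
    principalIdeal (u * v) ⊆ principalIdeal u := by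
  rintro z ⟨a, b, rfl⟩
  exact ⟨a, (v : WithOne S) * b, by push_cast; simp [mul_assoc]⟩

theorem principalIdeal_mul_right {S : Type*} [Semigroup S] (u v : S) :
    principalIdeal (u * v) ⊆ principalIdeal v := by
  rintro z ⟨a, b, rfl⟩
  exact ⟨a * (u : WithOne S), b, by push_cast; simp [mul_assoc]⟩

theorem self_mem_principalIdeal {S : Type*} [Semigroup S] (x : S) :
    (x : WithOne S) ∈ principalIdeal x :=
  ⟨1, 1, by simp⟩

/-- If a semigroup S is generated by a single 𝒥-class J with S ≠ J and the
principal factor J* is null (all products of elements of J fall outside J),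
then |J| = 1 and S is monogenic. -/
theorem null_principal_factor_implies_monogenic
    (S : Type*) [Semigroup S] (J : Set S)
    (x₀ : S) (hJ : J = {y | principalIdeal y = principalIdeal x₀})
    (hgen : Subsemigroup.closure J = ⊤)
    (hne : J ≠ Set.univ)
    (hnull : ∀ s ∈ J, ∀ t ∈ J, s * t ∉ J) :
    ∃ a : S, J = {a} ∧ Subsemigroup.closure {a} = ⊤ := by
  -- every element's ideal is contained in the ideal of x₀
  have hall : ∀ s : S, principalIdeal s ⊆ principalIdeal x₀ := by
    intro s
    have hs : s ∈ Subsemigroup.closure J := hgen ▸ Subsemigroup.mem_top s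
    induction hs using Subsemigroup.closure_induction with
    | mem y hy => rw [hJ] at hy; exact le_of_eq hy
    | mul y z hy hz ihy ihz => exact (principalIdeal_mul_left y z).trans ihy
  -- squeeze lemma: if ideal x₀ ⊆ ideal y then y ∈ J
  have hsq : ∀ y : S, principalIdeal x₀ ⊆ principalIdeal y → y ∈ J := by
    intro y h
    rw [hJ]
    exact le_antisymm (hall y) h
  have hmemJ : ∀ y ∈ J, principalIdeal y = principalIdeal x₀ := by
    intro y hy; rw [hJ] at hy; exact hy
  -- j * s ∉ J for j ∈ J, s : S
  have hD : ∀ j ∈ J, ∀ s : S, j * s ∉ J := by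
    intro j hj s
    have hs : s ∈ Subsemigroup.closure J := hgen ▸ Subsemigroup.mem_top s
    induction hs using Subsemigroup.closure_induction with
    | mem y hy => exact hnull j hj y hy
    | mul y z hy hz ihy ihz =>
      intro hmem
      apply ihy
      apply hsq
      have h1 : principalIdeal (j * (y * z)) ⊆ principalIdeal (j * y) := by
        rw [← mul_assoc]
        exact principalIdeal_mul_left (j * y) z
      rw [← hmemJ _ hmem]
      exact h1
  -- s * j ∉ J
  have hE : ∀ j ∈ J, ∀ s : S, s * j ∉ J := by
    intro j hj s
    have hs : s ∈ Subsemigroup.closure J := hgen ▸ Subsemigroup.mem_top s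
    induction hs using Subsemigroup.closure_induction with
    | mem y hy => exact hnull y hy j hj
    | mul y z hy hz ihy ihz =>
      intro hmem
      apply ihz
      apply hsq
      have h1 : principalIdeal (y * z * j) ⊆ principalIdeal (z * j) := by
        rw [mul_assoc]
        exact principalIdeal_mul_right y (z * j)
      rw [← hmemJ _ hmem]
      exact h1
  -- s * j * t ∉ J
  have hF : ∀ j ∈ J, ∀ s t : S, s * j * t ∉ J := by
    intro j hj s t hmem
    apply hD j hj t
    apply hsq
    have h1 : principalIdeal (s * j * t) ⊆ principalIdeal (j * t) := by
      rw [mul_assoc]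
      exact principalIdeal_mul_right s (j * t)
    rw [← hmemJ _ hmem]
    exact h1
  have hx₀ : x₀ ∈ J := by rw [hJ]; exact rfl
  have hJx : J = {x₀} := by
    ext b
    constructor
    · intro hb
      have hmem : (b : WithOne S) ∈ principalIdeal x₀ := by
        rw [← hmemJ b hb]; exact self_mem_principalIdeal b
      obtain ⟨u, v, huv⟩ := hmem
      induction u using WithOne.recOneCoe with
      | one =>
        induction v using WithOne.recOneCoe with
        | one =>
          rw [one_mul, mul_one] at huv
          exact WithOne.coe_inj.mp huv
        | coe v =>
          rw [one_mul, ← WithOne.coe_mul] at huv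
          exact absurd (WithOne.coe_inj.mp huv ▸ hb) (hD x₀ hx₀ v)
      | coe u =>
        induction v using WithOne.recOneCoe with
        | one =>
          rw [mul_one, ← WithOne.coe_mul] at huv
          exact absurd (WithOne.coe_inj.mp huv ▸ hb) (hE x₀ hx₀ u)
        | coe v =>
          rw [← WithOne.coe_mul, ← WithOne.coe_mul] at huv
          exact absurd (WithOne.coe_inj.mp huv ▸ hb) (hF x₀ hx₀ u v)
    · rintro rfl; exact hx₀
  exact ⟨x₀, hJx, by rw [← hJx]; exact hgen⟩
end

section
/- Let M be a monoid. The set R₁ of elements 𝓡-related to 1 (those with a right inverse) is a submonoid of M, and its complement M − R₁ (if nonempty) is a subsemigroup of M. Consequently, if M is not a group, M is the union of two proper subsemigroups. -/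
/-- In a monoid M, the set R₁ of elements with a right inverse is a submonoid,
its complement is closed under multiplication, and if M is not a group
(R₁ ≠ M), then M is the union of the two proper subsemigroups R₁ and M − R₁. -/
theorem monoid_not_group_union_of_two_proper_subsemigroups
    (M : Type*) [Monoid M] :
    (1 : M) ∈ {f : M | ∃ g : M, f * g = 1} ∧
    (∀ x ∈ {f : M | ∃ g : M, f * g = 1}, ∀ y ∈ {f : M | ∃ g : M, f * g = 1},
        x * y ∈ {f : M | ∃ g : M, f * g = 1}) ∧
    (∀ x ∈ {f : M | ∃ g : M, f * g = 1}ᶜ, ∀ y ∈ {f : M | ∃ g : M, f * g = 1}ᶜ,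
        x * y ∈ {f : M | ∃ g : M, f * g = 1}ᶜ) ∧
    ({f : M | ∃ g : M, f * g = 1}ᶜ.Nonempty →
      {f : M | ∃ g : M, f * g = 1} ≠ Set.univ ∧
      {f : M | ∃ g : M, f * g = 1}ᶜ ≠ Set.univ ∧
      {f : M | ∃ g : M, f * g = 1} ∪ {f : M | ∃ g : M, f * g = 1}ᶜ = Set.univ) := by
  refine ⟨⟨1, one_mul 1⟩, ?_, ?_, ?_⟩
  · rintro x ⟨gx, hx⟩ y ⟨gy, hy⟩
    exact ⟨gy * gx, by rw [mul_assoc, ← mul_assoc y, hy, one_mul, hx]⟩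
  · rintro x hx y hy ⟨g, hg⟩
    exact hx ⟨y * g, by rw [← mul_assoc, hg]⟩
  · rintro ⟨a, ha⟩
    refine ⟨?_, ?_, Set.union_compl_self _⟩
    · intro h
      exact ha (h ▸ Set.mem_univ a)
    · intro h
      have h1 : (1:M) ∈ {f : M | ∃ g : M, f * g = 1}ᶜ := h ▸ Set.mem_univ 1
      exact h1 ⟨1, one_mul 1⟩
end
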